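/- Let ζ > 0, r > 0, t ≥ 0 and let w : [t−r, t] → ℝ be continuous. Then |∫₀¹ ∫_{t−rl}^{t} exp(−ζ(t−s))·w(s) ds dl| ≤ ((1−exp(−ζr))/ζ)^{1/2} · ( ∫_{t−r}^{t} exp(−ζ(t−s))·w(s)² ds )^{1/2}. -/

import Mathlib

/-! For each `l`, the weighted Cauchy–Schwarz inequality with weight `exp (-ζ (t - s))` on
`[t - r l, t]` bounds the inner integral; enlarging the interval to `[t - r, t]`, where the weight
integrates to `(1 - exp (-ζ r)) / ζ`, makes the bound independent of `l`, and averaging over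
`l ∈ [0, 1]` preserves it. -/

open Real Set MeasureTheory

theorem abs_integral_mul_le_sqrt_mul_sqrt {α : Type*} [MeasurableSpace α] {μ : Measure α}
    {ρ f : α → ℝ} (hρ : 0 ≤ᵐ[μ] ρ) (hρi : Integrable ρ μ)
    (hρf : Integrable (fun x ↦ ρ x * f x ^ 2) μ) (hf : AEStronglyMeasurable f μ) :
    |∫ x, ρ x * f x ∂μ| ≤ √(∫ x, ρ x ∂μ) * √(∫ x, ρ x * f x ^ 2 ∂μ) := by
  set u : α → ℝ := fun x ↦ √(ρ x)
  have hu_sq : ∀ᵐ x ∂μ, ‖u x‖ ^ 2 = ρ x := by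
    filter_upwards [hρ] with x hx
    simp [u, Real.sq_sqrt hx]
  have huf_sq : ∀ᵐ x ∂μ, ‖u x * f x‖ ^ 2 = ρ x * f x ^ 2 := by
    filter_upwards [hu_sq] with x hx
    rw [norm_mul, mul_pow, hx, Real.norm_eq_abs, sq_abs]
  have hu_meas : AEStronglyMeasurable u μ :=
    continuous_sqrt.comp_aestronglyMeasurable hρi.aestronglyMeasurable
  have hu : MemLp u (ENNReal.ofReal 2) μ := by
    rw [ENNReal.ofReal_ofNat, memLp_two_iff_integrable_sq_norm hu_meas]
    exact hρi.congr (hu_sq.mono fun x hx ↦ hx.symm)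
  have huf : MemLp (fun x ↦ u x * f x) (ENNReal.ofReal 2) μ := by
    rw [ENNReal.ofReal_ofNat, memLp_two_iff_integrable_sq_norm (f := fun x ↦ u x * f x)
      (hu_meas.mul hf)]
    exact hρf.congr (huf_sq.mono fun x hx ↦ hx.symm)
  have holder := integral_mul_norm_le_Lp_mul_Lq Real.HolderConjugate.two_two hu huf
  simp only [Real.rpow_two, ← Real.sqrt_eq_rpow] at holder
  calc |∫ x, ρ x * f x ∂μ| ≤ ∫ x, ‖u x‖ * ‖u x * f x‖ ∂μ := by
        refine (abs_integral_le_integral_abs).trans_eq (integral_congr_ae ?_)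
        filter_upwards [hρ, hu_sq] with x hx0 hx
        rw [norm_mul, ← mul_assoc, ← sq, hx, abs_mul, abs_of_nonneg hx0, Real.norm_eq_abs]
    _ ≤ _ := holder
    _ = _ := by rw [integral_congr_ae hu_sq, integral_congr_ae huf_sq]

theorem abs_intervalIntegral_mul_le_sqrt_mul_sqrt {ρ f : ℝ → ℝ} {a b c : ℝ} (hca : c ≤ a)
    (hab : a ≤ b) (hρ_nonneg : ∀ x ∈ Icc c b, 0 ≤ ρ x) (hρ : ContinuousOn ρ (Icc c b))
    (hf : ContinuousOn f (Icc c b)) :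
    |∫ x in a..b, ρ x * f x| ≤ √(∫ x in c..b, ρ x) * √(∫ x in c..b, ρ x * f x ^ 2) := by
  have hsub : Ioc a b ⊆ Icc c b := Ioc_subset_Icc_self.trans (Icc_subset_Icc hca le_rfl)
  have hρf : ContinuousOn (fun x ↦ ρ x * f x ^ 2) (Icc c b) := hρ.mul (hf.pow 2)
  have hρf_nonneg : ∀ x ∈ Icc c b, 0 ≤ ρ x * f x ^ 2 :=
    fun x hx ↦ mul_nonneg (hρ_nonneg x hx) (sq_nonneg _)
  have mono_interval {g : ℝ → ℝ} (hg : ContinuousOn g (Icc c b)) (hg0 : ∀ x ∈ Icc c b, 0 ≤ g x) :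
      ∫ x in a..b, g x ≤ ∫ x in c..b, g x :=
    intervalIntegral.integral_mono_interval hca hab le_rfl
      (ae_restrict_of_forall_mem measurableSet_Ioc fun x hx ↦ hg0 x (Ioc_subset_Icc_self hx))
      (hg.intervalIntegrable_of_Icc (hca.trans hab))
  calc |∫ x in a..b, ρ x * f x|
      ≤ √(∫ x in a..b, ρ x) * √(∫ x in a..b, ρ x * f x ^ 2) := by
        simp only [intervalIntegral.integral_of_le hab]
        exact abs_integral_mul_le_sqrt_mul_sqrt
          (ae_restrict_of_forall_mem measurableSet_Ioc fun x hx ↦ hρ_nonneg x (hsub hx))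
          (hρ.integrableOn_Icc.mono_set hsub) (hρf.integrableOn_Icc.mono_set hsub)
          ((hf.mono hsub).aestronglyMeasurable measurableSet_Ioc)
    _ ≤ √(∫ x in c..b, ρ x) * √(∫ x in c..b, ρ x * f x ^ 2) := by
        gcongr
        exacts [mono_interval hρ hρ_nonneg, mono_interval hρf hρf_nonneg]

theorem integral_exp_neg_mul_sub {ζ : ℝ} (hζ : ζ ≠ 0) (a t : ℝ) :
    ∫ s in a..t, exp (-ζ * (t - s)) = (1 - exp (-ζ * (t - a))) / ζ := by
  rw [intervalIntegral.integral_comp_sub_left (fun u ↦ exp (-ζ * u)),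
    intervalIntegral.integral_comp_mul_left exp (neg_ne_zero.2 hζ), integral_exp]
  rw [sub_self, mul_zero, exp_zero, smul_eq_mul, inv_neg, neg_mul, ← mul_neg, neg_sub,
    div_eq_inv_mul]

theorem stmt4_general (ζ r t : ℝ) (hζ : 0 < ζ) (hr : 0 < r)
    (w : ℝ → ℝ) (hw : ContinuousOn w (Icc (t - r) t)) :
    |∫ l in (0:ℝ)..1, ∫ s in (t - r * l)..t, Real.exp (-ζ * (t - s)) * w s| ≤
      Real.sqrt ((1 - Real.exp (-ζ * r)) / ζ) *
        Real.sqrt (∫ s in (t - r)..t, Real.exp (-ζ * (t - s)) * (w s) ^ 2) := by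
  have hweight : (1 - exp (-ζ * r)) / ζ = ∫ s in (t - r)..t, exp (-ζ * (t - s)) := by
    rw [integral_exp_neg_mul_sub hζ.ne', sub_sub_cancel]
  have hinner : ∀ l ∈ uIoc (0 : ℝ) 1, ‖∫ s in (t - r * l)..t, exp (-ζ * (t - s)) * w s‖ ≤
      √((1 - exp (-ζ * r)) / ζ) * √(∫ s in (t - r)..t, exp (-ζ * (t - s)) * w s ^ 2) := by
    intro l hl
    rw [uIoc_of_le zero_le_one] at hl
    rw [Real.norm_eq_abs, hweight]
    exact abs_intervalIntegral_mul_le_sqrt_mul_sqrt (by nlinarith [hl.2]) (by nlinarith [hl.1])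
      (fun _ _ ↦ (exp_pos _).le) (by fun_prop) hw
  simpa using intervalIntegral.norm_integral_le_of_norm_le_const hinner

/-- Double-integral Cauchy–Schwarz bound from the proof of Theorem 3.3. -/
theorem stmt4 (ζ r t : ℝ) (hζ : 0 < ζ) (hr : 0 < r) (ht : 0 ≤ t)
    (w : ℝ → ℝ) (hw : ContinuousOn w (Icc (t - r) t)) :
    |∫ l in (0:ℝ)..1, ∫ s in (t - r * l)..t, Real.exp (-ζ * (t - s)) * w s| ≤
      Real.sqrt ((1 - Real.exp (-ζ * r)) / ζ) *
        Real.sqrt (∫ s in (t - r)..t, Real.exp (-ζ * (t - s)) * (w s) ^ 2) :=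
  stmt4_general ζ r t hζ hr w hw
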